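/- Let ℓ ≥ 1 and for each i ∈ {1, ..., ℓ} let I_i = {a_i, a_i+b_i, ..., a_i+(m_i−1)b_i} be an m_i-term arithmetic progression of positive integers with gcd(a_i, b_i) = 1, and assume I_i ∩ I_j = ∅ for i ≠ j. Set X = I_1 ∪ ... ∪ I_ℓ and for each positive integer d and each i, let I_{id} = {x ∈ I_i : d ∣ x}. Then for all positive integers n and k: the number of subsets A of X with |A| = k and gcd(A ∪ {n}) = 1 equals Σ_{d ∣ n} μ(d)·C(Σ_{i=1}^{ℓ} |I_{id}|, k), and the number of nonempty subsets A of X with gcd(A ∪ {n}) = 1 equals Σ_{d ∣ n} μ(d)·(2^{Σ_{i=1}^{ℓ} |I_{id}|} − 1); here |I_{id}| = 0 if gcd(d, b_i) ≠ 1, and if gcd(d, b_i) = 1 then |I_{id}| = ⌊m_i/d⌋ + ε_{id}, where ε_{id} = 1 if d ∤ m_i and the residue of −a_i·b_i^{−1} modulo d lies in {0, ..., m_i − 1 − ⌊m_i/d⌋·d} (b_i^{−1} being the multiplicative inverse of b_i modulo d), and ε_{id} = 0 otherwise. -/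
import Mathlib

open Finset

private lemma sum_moebius_divisors (n : ℕ) :
    ∑ d ∈ n.divisors, (ArithmeticFunction.moebius d : ℤ) = if n = 1 then 1 else 0 := by
  calc ∑ d ∈ n.divisors, (ArithmeticFunction.moebius d : ℤ)
      = (ArithmeticFunction.moebius * (ArithmeticFunction.zeta : ArithmeticFunction ℤ)) n :=
        (ArithmeticFunction.coe_mul_zeta_apply).symm
    _ = (1 : ArithmeticFunction ℤ) n := by rw [ArithmeticFunction.moebius_mul_coe_zeta]
    _ = _ := ArithmeticFunction.one_apply

/-- Core Möbius-inversion counting identity. -/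
private lemma core_count (X : Finset ℕ) (n : ℕ) (hn : 0 < n)
    (P : Finset ℕ → Prop) [DecidablePred P] :
    ((X.powerset.filter (fun A => P A ∧ Nat.gcd (A.gcd id) n = 1)).card : ℤ) =
      ∑ d ∈ n.divisors, (ArithmeticFunction.moebius d : ℤ) *
        (((X.filter (fun x => d ∣ x)).powerset.filter P).card : ℤ) := by
  have key : ∀ A : Finset ℕ,
      (if Nat.gcd (A.gcd id) n = 1 then (1 : ℤ) else 0) =
      ∑ d ∈ n.divisors,
        (if d ∣ A.gcd id then (ArithmeticFunction.moebius d : ℤ) else 0) := by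
    intro A
    rw [← Finset.sum_filter]
    have hset : n.divisors.filter (fun d => d ∣ A.gcd id)
        = (Nat.gcd (A.gcd id) n).divisors := by
      ext d
      simp only [Finset.mem_filter, Nat.mem_divisors, Nat.dvd_gcd_iff]
      constructor
      · rintro ⟨⟨h1, _⟩, h3⟩
        exact ⟨⟨h3, h1⟩, (Nat.gcd_pos_of_pos_right _ hn).ne'⟩
      · rintro ⟨⟨h1, h2⟩, _⟩
        exact ⟨⟨h2, hn.ne'⟩, h1⟩
    rw [hset, sum_moebius_divisors]
  have hsplit : X.powerset.filter (fun A => P A ∧ Nat.gcd (A.gcd id) n = 1)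
      = (X.powerset.filter P).filter (fun A => Nat.gcd (A.gcd id) n = 1) := by
    rw [Finset.filter_filter]
  rw [hsplit]
  have hcard : (((X.powerset.filter P).filter
      (fun A => Nat.gcd (A.gcd id) n = 1)).card : ℤ)
      = ∑ A ∈ X.powerset.filter P,
          (if Nat.gcd (A.gcd id) n = 1 then (1 : ℤ) else 0) := by
    rw [Finset.card_filter]
    push_cast
    rfl
  rw [hcard, Finset.sum_congr rfl (fun A _ => key A), Finset.sum_comm]
  refine Finset.sum_congr rfl fun d _ => ?_
  rw [← Finset.sum_filter, Finset.sum_const, nsmul_eq_mul, mul_comm]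
  congr 3
  ext A
  simp only [Finset.mem_filter, Finset.mem_powerset]
  constructor
  · rintro ⟨⟨hAX, hPA⟩, hdvd⟩
    exact ⟨fun x hx => Finset.mem_filter.mpr
      ⟨hAX hx, hdvd.trans (Finset.gcd_dvd hx)⟩, hPA⟩
  · rintro ⟨hAX, hPA⟩
    exact ⟨⟨fun x hx => (Finset.mem_filter.mp (hAX hx)).1, hPA⟩,
      Finset.dvd_gcd fun x hx => (Finset.mem_filter.mp (hAX hx)).2⟩

/-- The number of t ∈ [0, m) with `t % d = t0`. -/
private lemma count_residues (d m t0 : ℕ) (hd : 0 < d) (ht0 : t0 < d) :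
    ((Finset.range m).filter (fun t => t % d = t0)).card
      = m / d + (if t0 < m % d then 1 else 0) := by
  have hm2 : m / d * d + m % d = m := Nat.div_add_mod' m d
  have himg : (Finset.range m).filter (fun t => t % d = t0)
      = (Finset.range (m / d + (if t0 < m % d then 1 else 0))).image
          (fun q => q * d + t0) := by
    ext t
    simp only [Finset.mem_filter, Finset.mem_range, Finset.mem_image]
    constructor
    · rintro ⟨htm, hmod⟩
      have ht2 : t / d * d + t % d = t := Nat.div_add_mod' t d
      refine ⟨t / d, ?_, by omega⟩
      have h1 : t / d ≤ m / d := Nat.div_le_div_right htm.le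
      by_cases hc : t0 < m % d
      · simp only [hc, if_true]; omega
      · simp only [hc, if_false, Nat.add_zero]
        rcases Nat.lt_or_ge (t / d) (m / d) with h | h
        · exact h
        · exfalso
          have hq : t / d = m / d := le_antisymm h1 h
          rw [hq] at ht2
          omega
    · rintro ⟨q, hq, rfl⟩
      have hmod : (q * d + t0) % d = t0 := by
        rw [Nat.add_comm, Nat.add_mul_mod_self_right, Nat.mod_eq_of_lt ht0]
      refine ⟨?_, hmod⟩
      by_cases hc : t0 < m % d
      · simp only [hc, if_true] at hq
        have : q * d ≤ m / d * d := Nat.mul_le_mul_right d (by omega)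
        omega
      · simp only [hc, if_false, Nat.add_zero] at hq
        have : (q + 1) * d ≤ m / d * d := Nat.mul_le_mul_right d (by omega)
        have h2 : q * d + d ≤ m / d * d := by rw [Nat.add_one_mul] at this; omega
        omega
  rw [himg, Finset.card_image_of_injective _ (fun x y h => by
    exact Nat.eq_of_mul_eq_mul_right hd (by omega)), Finset.card_range]

/-- Cardinality of `I_{id}` for a single arithmetic progression. -/
private lemma Iid_card (d a b m : ℕ) (hd : 0 < d) (hb : 0 < b)
    (hcop : Nat.gcd a b = 1) :
    (((Finset.range m).image (fun t => a + t * b)).filter (fun x => d ∣ x)).card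
      = if Nat.gcd d b = 1 then
          m / d + (if ¬ (d ∣ m) ∧
              ((-(a : ZMod d)) * (b : ZMod d)⁻¹).val ≤ m - 1 - m / d * d
            then 1 else 0)
        else 0 := by
  haveI : NeZero d := ⟨hd.ne'⟩
  rw [Finset.filter_image, Finset.card_image_of_injective _
    (fun x y h => Nat.eq_of_mul_eq_mul_right hb (by omega))]
  by_cases hdb : Nat.gcd d b = 1
  · rw [if_pos hdb]
    set t0 := ((-(a : ZMod d)) * (b : ZMod d)⁻¹).val with ht0def
    have ht0 : t0 < d := ZMod.val_lt _
    have hbu : IsUnit (b : ZMod d) := by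
      rw [ZMod.isUnit_iff_coprime]
      rwa [Nat.Coprime, Nat.gcd_comm]
    have hpred : ∀ t, d ∣ a + t * b ↔ t % d = t0 := by
      intro t
      rw [← ZMod.natCast_eq_zero_iff]
      push_cast
      constructor
      · intro h
        have ht : (t : ZMod d) * b = -a := by linear_combination h
        have heq : (t : ZMod d) = -(a : ZMod d) * (b : ZMod d)⁻¹ := by
          rw [← ht, mul_assoc, ZMod.mul_inv_of_unit _ hbu, mul_one]
        rw [ht0def, ← heq, ZMod.val_natCast]
      · intro h
        have heq : (t : ZMod d) = -(a : ZMod d) * (b : ZMod d)⁻¹ :=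
          ZMod.val_injective d (by rw [ZMod.val_natCast, h])
        rw [heq, mul_assoc, ZMod.inv_mul_of_unit _ hbu, mul_one]
        ring
    have hfil : (Finset.range m).filter (fun t => d ∣ a + t * b)
        = (Finset.range m).filter (fun t => t % d = t0) :=
      Finset.filter_congr (fun t _ => by rw [hpred t])
    rw [hfil, count_residues d m t0 hd ht0]
    congr 1
    have hm2 : m / d * d + m % d = m := Nat.div_add_mod' m d
    have hmlt : m % d < d := Nat.mod_lt _ hd
    have hmd0 : d ∣ m ↔ m % d = 0 := Nat.dvd_iff_mod_eq_zero
    by_cases hdm : d ∣ m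
    · have h0 : m % d = 0 := hmd0.mp hdm
      rw [if_neg (by omega), if_neg (fun h => h.1 hdm)]
    · have h0 : m % d ≠ 0 := fun h => hdm (hmd0.mpr h)
      by_cases h1 : t0 < m % d
      · rw [if_pos h1, if_pos ⟨hdm, by omega⟩]
      · rw [if_neg h1, if_neg (by rintro ⟨-, h⟩; omega)]
  · rw [if_neg hdb]
    rw [Finset.card_eq_zero, Finset.filter_eq_empty_iff]
    intro t _
    intro hdvd
    apply hdb
    have hg1 : Nat.gcd d b ∣ a := by
      have h1 : Nat.gcd d b ∣ a + t * b := (Nat.gcd_dvd_left d b).trans hdvd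
      have h2 : Nat.gcd d b ∣ t * b := Dvd.dvd.mul_left (Nat.gcd_dvd_right d b) t
      have h3 := Nat.dvd_sub h1 h2
      simpa using h3
    have hfin : Nat.gcd d b ∣ Nat.gcd a b := Nat.dvd_gcd hg1 (Nat.gcd_dvd_right d b)
    rw [hcop] at hfin
    exact Nat.dvd_one.mp hfin

/-- Filtering a `biUnion` distributes over the pieces. -/
private lemma filter_biUnion_card (ℓ : ℕ) (I : ℕ → Finset ℕ)
    (hdisj : ∀ i < ℓ, ∀ j < ℓ, i ≠ j → Disjoint (I i) (I j))
    (p : ℕ → Prop) [DecidablePred p] :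
    (((Finset.range ℓ).biUnion I).filter p).card
      = ∑ i ∈ Finset.range ℓ, ((I i).filter p).card := by
  have h1 : ((Finset.range ℓ).biUnion I).filter p
      = (Finset.range ℓ).biUnion (fun i => (I i).filter p) := by
    ext x
    simp only [Finset.mem_filter, Finset.mem_biUnion]
    tauto
  rw [h1]
  apply Finset.card_biUnion
  intro i hi j hj hij
  exact Finset.disjoint_filter_filter
    (hdisj i (Finset.mem_range.mp hi) j (Finset.mem_range.mp hj) hij)

/-- Theorem 4 (parts (i), (ii)): Let `X = I_1 ∪ … ∪ I_ℓ` where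
`I_i = {a_i, a_i+b_i, …, a_i+(m_i−1)b_i}` are pairwise disjoint arithmetic
progressions of positive integers with `gcd(a_i, b_i) = 1`.  Then for all
positive integers `n, k`,
`Φ_k(X, n) = Σ_{d ∣ n} μ(d)·C(Σ_{i=1}^ℓ |I_{id}|, k)` and
`Φ(X, n) = Σ_{d ∣ n} μ(d)·(2^{Σ_{i=1}^ℓ |I_{id}|} − 1)`, where `|I_{id}| = 0`
if `gcd(d, b_i) ≠ 1` and `|I_{id}| = ⌊m_i/d⌋ + ε_{id}` otherwise. -/
theorem card_relPrimeTo_subsets_union_arith_progs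
    (ℓ : ℕ) (hℓ : 1 ≤ ℓ) (a b m : ℕ → ℕ) (I : ℕ → Finset ℕ)
    (ha : ∀ i < ℓ, 0 < a i) (hb : ∀ i < ℓ, 0 < b i) (hm : ∀ i < ℓ, 0 < m i)
    (hcop : ∀ i < ℓ, Nat.gcd (a i) (b i) = 1)
    (hI : ∀ i < ℓ, I i = (Finset.range (m i)).image (fun t => a i + t * b i))
    (hdisj : ∀ i < ℓ, ∀ j < ℓ, i ≠ j → Disjoint (I i) (I j))
    (n k : ℕ) (hn : 0 < n) (hk : 0 < k) :
    (((((Finset.range ℓ).biUnion I).powerset.filter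
        (fun A => A.card = k ∧ Nat.gcd (A.gcd id) n = 1)).card : ℤ) =
      ∑ d ∈ n.divisors,
        ArithmeticFunction.moebius d *
          ((∑ i ∈ Finset.range ℓ,
            (if Nat.gcd d (b i) = 1 then
              m i / d +
                (if ¬ (d ∣ m i) ∧
                    ((-(a i : ZMod d)) * (b i : ZMod d)⁻¹).val ≤ m i - 1 - m i / d * d
                  then 1 else 0)
              else 0)).choose k : ℤ)) ∧
    (((((Finset.range ℓ).biUnion I).powerset.filter
        (fun A => A.Nonempty ∧ Nat.gcd (A.gcd id) n = 1)).card : ℤ) =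
      ∑ d ∈ n.divisors,
        ArithmeticFunction.moebius d *
          (2 ^ (∑ i ∈ Finset.range ℓ,
            (if Nat.gcd d (b i) = 1 then
              m i / d +
                (if ¬ (d ∣ m i) ∧
                    ((-(a i : ZMod d)) * (b i : ZMod d)⁻¹).val ≤ m i - 1 - m i / d * d
                  then 1 else 0)
              else 0)) - 1)) := by
  set X := (Finset.range ℓ).biUnion I with hX
  have hcardXd : ∀ d ∈ n.divisors,
      (X.filter (fun x => d ∣ x)).card
        = ∑ i ∈ Finset.range ℓ,
            (if Nat.gcd d (b i) = 1 then
              m i / d +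
                (if ¬ (d ∣ m i) ∧
                    ((-(a i : ZMod d)) * (b i : ZMod d)⁻¹).val ≤ m i - 1 - m i / d * d
                  then 1 else 0)
              else 0) := by
    intro d hd
    have hd0 : 0 < d := Nat.pos_of_mem_divisors hd
    rw [filter_biUnion_card ℓ I hdisj]
    refine Finset.sum_congr rfl fun i hi => ?_
    have hiℓ : i < ℓ := Finset.mem_range.mp hi
    rw [hI i hiℓ]
    exact Iid_card d (a i) (b i) (m i) hd0 (hb i hiℓ) (hcop i hiℓ)
  constructor
  · rw [core_count X n hn (fun A => A.card = k)]
    refine Finset.sum_congr rfl fun d hd => ?_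
    congr 1
    rw [← hcardXd d hd, ← Finset.powersetCard_eq_filter, Finset.card_powersetCard]
  · rw [core_count X n hn (fun A => A.Nonempty)]
    refine Finset.sum_congr rfl fun d hd => ?_
    congr 1
    rw [← hcardXd d hd]
    have herase : (X.filter (fun x => d ∣ x)).powerset.filter (fun A => A.Nonempty)
        = (X.filter (fun x => d ∣ x)).powerset.erase ∅ := by
      ext A
      simp [Finset.nonempty_iff_ne_empty, and_comm]
    rw [herase, Finset.card_erase_of_mem (Finset.empty_mem_powerset _),
      Finset.card_powerset]
    have h1 : 1 ≤ 2 ^ (X.filter (fun x => d ∣ x)).card := Nat.one_le_two_pow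
    push_cast [Nat.cast_sub h1]
    ring
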